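/- Fix α ∈ (0,1) and μ > 0, and let q = Φ⁻¹(1 − α/2). Define f(c) = Φ((−q − μ√c)/√(2c)) + 1 − Φ((q − μ√c)/√(2c)) for real c > 0. Then f is monotonically increasing in c. -/

import Mathlib

/-!
Since `√(2c) = √2 · √c`, each argument of `Φ` splits as `(±q - μ√c) / √(2c) = ±q / √(2c) - μ / √2`,
so `μ` only contributes a constant shift. With `q ≥ 0` (because `Φ q = 1 - α/2 > 1/2 = Φ 0`), the
first argument increases and the second decreases in `c`, and `Φ` is monotone.
-/

open MeasureTheory ProbabilityTheory

/-- Standard normal cumulative distribution function. -/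
noncomputable def stdNormalCDF (t : ℝ) : ℝ := ((gaussianReal 0 1) (Set.Iic t)).toReal

open Set

lemma stdNormalCDF_mono : Monotone stdNormalCDF := fun _ _ hab =>
  ENNReal.toReal_mono (measure_ne_top _ _) (measure_mono (Iic_subset_Iic.2 hab))

lemma stdNormalCDF_zero : stdNormalCDF 0 = 1 / 2 := by
  set P := gaussianReal 0 1
  have hsymm : P.real (Iic 0) = P.real (Ici 0) := by
    have hmap : P.map (fun x ↦ -x) = P := by simpa using gaussianReal_map_neg (μ := 0) (v := 1)
    conv_rhs => rw [← hmap, map_measureReal_apply measurable_neg measurableSet_Ici]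
    simp
  have hatom : P.real (Ioi 0) = P.real (Ici 0) :=
    measureReal_congr ((gaussianReal_absolutelyContinuous 0 one_ne_zero).ae_eq Ioi_ae_eq_Ici)
  have hcompl : P.real (Ioi 0) = 1 - P.real (Iic 0) := by
    rw [← compl_Iic, measureReal_compl measurableSet_Iic, probReal_univ]
  rw [stdNormalCDF, ← measureReal_def]
  linarith

lemma nonneg_of_half_lt_stdNormalCDF {q : ℝ} (hq : 1 / 2 < stdNormalCDF q) : 0 ≤ q := by
  by_contra! hneg
  have := stdNormalCDF_mono hneg.le
  rw [stdNormalCDF_zero] at this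
  linarith

lemma sub_mul_sqrt_div_sqrt_two_mul (a μ : ℝ) {c : ℝ} (hc : 0 < c) :
    (a - μ * √c) / √(2 * c) = a / √(2 * c) - μ / √2 := by
  rw [Real.sqrt_mul zero_le_two]
  field_simp [(Real.sqrt_pos.2 hc).ne']

lemma antitoneOn_div_sqrt_two_mul {a : ℝ} (ha : 0 ≤ a) :
    AntitoneOn (fun c => a / √(2 * c)) (Ioi 0) := fun _ hc₁ _ _ hle =>
  div_le_div_of_nonneg_left ha (Real.sqrt_pos.2 (by simp_all)) (Real.sqrt_le_sqrt (by linarith))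

lemma antitoneOn_sub_mul_sqrt_div_sqrt_two_mul {a : ℝ} (ha : 0 ≤ a) (μ : ℝ) :
    AntitoneOn (fun c => (a - μ * √c) / √(2 * c)) (Ioi 0) := by
  intro c₁ hc₁ c₂ hc₂ hle
  simp only [sub_mul_sqrt_div_sqrt_two_mul _ _ hc₁, sub_mul_sqrt_div_sqrt_two_mul _ _ hc₂]
  exact sub_le_sub_right (antitoneOn_div_sqrt_two_mul ha hc₁ hc₂ hle) _

lemma monotoneOn_div_sqrt_two_mul {a : ℝ} (ha : a ≤ 0) :
    MonotoneOn (fun c => a / √(2 * c)) (Ioi 0) := by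
  intro c₁ hc₁ c₂ hc₂ hle
  have := antitoneOn_div_sqrt_two_mul (neg_nonneg.2 ha) hc₁ hc₂ hle
  simp only [neg_div] at this
  exact neg_le_neg_iff.1 this

lemma monotoneOn_sub_mul_sqrt_div_sqrt_two_mul {a : ℝ} (ha : a ≤ 0) (μ : ℝ) :
    MonotoneOn (fun c => (a - μ * √c) / √(2 * c)) (Ioi 0) := by
  intro c₁ hc₁ c₂ hc₂ hle
  simp only [sub_mul_sqrt_div_sqrt_two_mul _ _ hc₁, sub_mul_sqrt_div_sqrt_two_mul _ _ hc₂]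
  exact sub_le_sub_right (monotoneOn_div_sqrt_two_mul ha hc₁ hc₂ hle) _

theorem exclusion_prob_monotone_general
    (α : ℝ) (hα : α ∈ Set.Ioo (0 : ℝ) 1) (μ : ℝ)
    (q : ℝ) (hq : stdNormalCDF q = 1 - α / 2) :
    MonotoneOn
      (fun c : ℝ =>
        stdNormalCDF ((-q - μ * Real.sqrt c) / Real.sqrt (2 * c))
          + 1 - stdNormalCDF ((q - μ * Real.sqrt c) / Real.sqrt (2 * c)))
      (Set.Ioi (0 : ℝ)) := by
  have hq₀ : 0 ≤ q := nonneg_of_half_lt_stdNormalCDF (by linarith [hα.2])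
  intro c₁ hc₁ c₂ hc₂ hle
  have hlower := stdNormalCDF_mono
    (monotoneOn_sub_mul_sqrt_div_sqrt_two_mul (neg_nonpos.2 hq₀) μ hc₁ hc₂ hle)
  have hupper := stdNormalCDF_mono (antitoneOn_sub_mul_sqrt_div_sqrt_two_mul hq₀ μ hc₁ hc₂ hle)
  dsimp only
  linarith

/-- With q = Φ⁻¹(1 − α/2) and μ > 0, the function
f(c) = Φ((−q − μ√c)/√(2c)) + 1 − Φ((q − μ√c)/√(2c)) is monotonically increasing in c > 0. -/
theorem exclusion_prob_monotone
    (α : ℝ) (hα : α ∈ Set.Ioo (0 : ℝ) 1) (μ : ℝ) (hμ : 0 < μ)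
    (q : ℝ) (hq : stdNormalCDF q = 1 - α / 2) :
    MonotoneOn
      (fun c : ℝ =>
        stdNormalCDF ((-q - μ * Real.sqrt c) / Real.sqrt (2 * c))
          + 1 - stdNormalCDF ((q - μ * Real.sqrt c) / Real.sqrt (2 * c)))
      (Set.Ioi (0 : ℝ)) :=
  exclusion_prob_monotone_general α hα μ q hq
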